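/- Let r be a positive integer relatively prime to 6, and set (a_0, a_1, a_2, a_3) = (2, 3, r, 6r). Then, in ℚ, ∑_{S ⊆ {0,1,2,3}} (−1)^{4−|S|} · (∏_{i∈S} a_i) / lcm_{i∈S}(a_i) = 2(r − 1), where the empty product equals 1 and the lcm over the empty set equals 1. -/

import Mathlib

/-!
The exponent `6r` is a multiple of the others, and `2, 3, r` are pairwise coprime. Hence a subset
containing the index of `6r` has lcm `6r`, and any other subset has lcm equal to its product. The
subsets of the second kind contribute an alternating sum of `1`s over the subsets of a nonempty
set, which vanishes; those of the first kind reassemble, by expanding a product, into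
`∏ (a_i - 1) = (2 - 1)(3 - 1)(r - 1)` over the three remaining exponents.
-/

open Finset

-- For `ι = Fin (n + 1)` this is the Milnor–Orlik expression for `b_{n-1}` of `L(a_0, …, a_n)`.
def milnorOrlikSum {ι : Type*} [Fintype ι] (a : ι → ℕ) : ℚ :=
  ∑ S : Finset ι, (-1) ^ (Fintype.card ι - #S) * (∏ i ∈ S, (a i : ℚ)) / ((S.lcm a : ℕ) : ℚ)

namespace Finset

variable {ι : Type*} [DecidableEq ι]

theorem lcm_insert_eq_of_dvd {s : Finset ι} {a : ι → ℕ} {j : ι} (h : ∀ i ∈ s, a i ∣ a j) :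
    (insert j s).lcm a = a j := by
  rw [lcm_insert]
  exact (lcm_eq_left_iff _ _ (normalize_eq _)).2 (Finset.lcm_dvd h)

theorem sum_powerset_neg_one_pow_mul_prod {R : Type*} [CommRing R] (s : Finset ι) (f : ι → R) :
    ∑ T ∈ s.powerset, (-1) ^ (#s - #T) * ∏ i ∈ T, f i = ∏ i ∈ s, (f i - 1) := by
  simp_rw [sub_eq_add_neg, prod_add, prod_const, mul_comm (∏ i ∈ _, f i)]
  refine sum_congr rfl fun T hT => ?_
  rw [card_sdiff_of_subset (mem_powerset.1 hT)]

end Finset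

theorem milnorOrlikSum_eq_prod_sub_one {ι : Type*} [Fintype ι] [DecidableEq ι] [Nontrivial ι]
    {a : ι → ℕ} {j : ι} (hj : a j ≠ 0) (hdvd : ∀ i, a i ∣ a j)
    (hcop : ((univ.erase j : Finset ι) : Set ι).Pairwise (Nat.Coprime.onFun a)) :
    milnorOrlikSum a = ∏ i ∈ univ.erase j, ((a i : ℚ) - 1) := by
  set s := univ.erase j
  have hcard : Fintype.card ι = #s + 1 := (card_erase_add_one (mem_univ j)).symm
  have hj_notMem : j ∉ s := notMem_erase j univ
  have hs : s.Nonempty := by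
    obtain ⟨i, hi⟩ := exists_ne j
    exact ⟨i, mem_erase.2 ⟨hi, mem_univ i⟩⟩
  have hsign (T : Finset ι) (hT : T ⊆ s) : Fintype.card ι - #T = #s - #T + 1 := by
    have := card_le_card hT
    omega
  have hwithout (T : Finset ι) (hT : T ⊆ s) :
      (∏ i ∈ T, (a i : ℚ)) / ((T.lcm a : ℕ) : ℚ) = ∏ i ∈ T, (1 : ℚ) := by
    rw [lcm_eq_prod (hcop.mono (coe_subset.2 hT)), Nat.cast_prod, prod_const_one]
    refine div_self (prod_ne_zero_iff.2 fun i _ => ?_)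
    exact Nat.cast_ne_zero.2 (ne_zero_of_dvd_ne_zero hj (hdvd i))
  have hwith (T : Finset ι) (hT : T ⊆ s) :
      (∏ i ∈ insert j T, (a i : ℚ)) / (((insert j T).lcm a : ℕ) : ℚ) = ∏ i ∈ T, (a i : ℚ) := by
    rw [lcm_insert_eq_of_dvd fun i _ => hdvd i, prod_insert fun h => hj_notMem (hT h)]
    field_simp
  unfold milnorOrlikSum
  rw [← powerset_univ, ← insert_erase (mem_univ j), sum_powerset_insert hj_notMem]
  have hvanish : ∑ T ∈ s.powerset, (-1 : ℚ) ^ (Fintype.card ι - #T) *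
      (∏ i ∈ T, (a i : ℚ)) / ((T.lcm a : ℕ) : ℚ) = -∏ i ∈ s, ((1 : ℚ) - 1) := by
    rw [← sum_powerset_neg_one_pow_mul_prod, ← sum_neg_distrib]
    refine sum_congr rfl fun T hT => ?_
    rw [hsign T (mem_powerset.1 hT), mul_div_assoc, hwithout T (mem_powerset.1 hT), pow_succ]
    ring
  have hmain : ∑ T ∈ s.powerset, (-1 : ℚ) ^ (Fintype.card ι - #(insert j T)) *
      (∏ i ∈ insert j T, (a i : ℚ)) / (((insert j T).lcm a : ℕ) : ℚ) =
      ∏ i ∈ s, ((a i : ℚ) - 1) := by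
    rw [← sum_powerset_neg_one_pow_mul_prod]
    refine sum_congr rfl fun T hT => ?_
    have hT := mem_powerset.1 hT
    rw [card_insert_of_notMem fun h => hj_notMem (hT h), hcard, Nat.add_sub_add_right,
      mul_div_assoc, hwith T hT]
  rw [hvanish, hmain, prod_eq_zero hs.choose_spec (sub_self 1), neg_zero, zero_add]

/-- Milnor–Orlik computation of `b_2` for the link `L(2, 3, r, 6r)` with `r` prime to `6`:
`∑_{S ⊆ {0,1,2,3}} (-1)^{4-|S|} (∏_{i∈S} a_i)/lcm_{i∈S}(a_i) = 2(r-1)`. -/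
theorem milnor_orlik_2_3_r_6r (r : ℕ) (hr : 0 < r) (hcop : Nat.Coprime r 6) :
    (∑ S : Finset (Fin 4), (-1 : ℚ) ^ (4 - S.card) *
        (∏ i ∈ S, (((![2, 3, r, 6 * r] : Fin 4 → ℕ) i : ℚ))) /
        ((S.lcm (![2, 3, r, 6 * r] : Fin 4 → ℕ) : ℕ) : ℚ)) =
      2 * ((r : ℚ) - 1) := by
  have hodd : Odd r := Nat.coprime_two_right.1 (hcop.coprime_dvd_right (by norm_num))
  have h3 : Nat.Coprime 3 r := (hcop.coprime_dvd_right (by norm_num)).symm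
  have hdvd : ∀ i, (![2, 3, r, 6 * r] : Fin 4 → ℕ) i ∣ 6 * r := by
    intro i
    fin_cases i <;>
      simp [Dvd.dvd.mul_right (by norm_num : 2 ∣ 6), Dvd.dvd.mul_right (by norm_num : 3 ∣ 6)]
  have hpair : ((univ.erase 3 : Finset (Fin 4)) : Set (Fin 4)).Pairwise
      (Nat.Coprime.onFun ![2, 3, r, 6 * r]) := by
    intro i hi k hk hik
    simp only [coe_erase, coe_univ, Set.mem_sdiff, Set.mem_singleton_iff] at hi hk
    fin_cases i <;> fin_cases k <;> simp [Function.onFun, hodd, Nat.odd_iff] at hi hk hik ⊢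
    exacts [h3, h3.symm]
  change milnorOrlikSum ![2, 3, r, 6 * r] = _
  rw [milnorOrlikSum_eq_prod_sub_one (j := 3) (by simp [hr.ne']) hdvd hpair,
    show univ.erase (3 : Fin 4) = {0, 1, 2} by decide, prod_insert (by decide),
    prod_insert (by decide), prod_singleton]
  norm_num [Matrix.cons_val_two, Matrix.tail_cons, Matrix.head_cons]
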